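/- arXiv:2410.05775 — 4 statements merged into one kernel-verified Lean document; each statement's English description precedes it below -/
import Mathlib

section
/- Let H and K be real Hilbert spaces, M : H → K a bounded linear map, b ∈ K, and β > 0. Then the Tikhonov functional J_β attains its infimum over H at exactly one point: there exists a unique f* ∈ H such that J_β(f*) ≤ J_β(f) for all f ∈ H. -/
open scoped RealInnerProductSpace
open Filter Topology

/-- For `β > 0` the Tikhonov functional attains its infimum over `H`
at exactly one point. -/
theorem stmt_6
    {H : Type*} [NormedAddCommGroup H] [InnerProductSpace ℝ H] [CompleteSpace H]
    {K : Type*} [NormedAddCommGroup K] [InnerProductSpace ℝ K] [CompleteSpace K]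
    (M : H →L[ℝ] K) (b : K) (β : ℝ) (hβ : 0 < β)
    (J : H → ℝ)
    (hJ : ∀ f : H, J f = (1 / 2) * ‖M f - b‖ ^ 2 + (β / 2) * ‖f‖ ^ 2) :
    ∃! fstar : H, ∀ f : H, J fstar ≤ J f := by
  have hJ0 : ∀ f, 0 ≤ J f := by
    intro f; rw [hJ]; positivity
  -- Key strict convexity inequality
  have key : ∀ f g : H, (β / 4) * ‖f - g‖ ^ 2
      ≤ J f + J g - 2 * J ((2:ℝ)⁻¹ • (f + g)) := by
    intro f g
    have hx : M ((2:ℝ)⁻¹ • (f + g)) - b = (2:ℝ)⁻¹ • ((M f - b) + (M g - b)) := by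
      rw [map_smul, map_add]; module
    rw [hJ f, hJ g, hJ ((2:ℝ)⁻¹ • (f + g)), hx]
    have h1 : ‖(2:ℝ)⁻¹ • ((M f - b) + (M g - b))‖ = 2⁻¹ * ‖(M f - b) + (M g - b)‖ := by
      rw [norm_smul]; norm_num
    have h2 : ‖(2:ℝ)⁻¹ • (f + g)‖ = 2⁻¹ * ‖f + g‖ := by
      rw [norm_smul]; norm_num
    rw [h1, h2]
    have p1 := parallelogram_law_with_norm ℝ (M f - b) (M g - b)
    have p2 := parallelogram_law_with_norm ℝ f g
    nlinarith [sq_nonneg ‖(M f - b) - (M g - b)‖, norm_nonneg ((M f - b) - (M g - b)),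
      norm_nonneg (f - g), hβ.le]
  set m := sInf (Set.range J) with hm
  have hne : (Set.range J).Nonempty := ⟨J 0, 0, rfl⟩
  have hbdd : BddBelow (Set.range J) := ⟨0, by rintro _ ⟨f, rfl⟩; exact hJ0 f⟩
  have hmle : ∀ f, m ≤ J f := fun f => csInf_le hbdd ⟨f, rfl⟩
  have hseq : ∀ n : ℕ, ∃ f, J f < m + 1 / (n + 1) := by
    intro n
    have hlt : m < m + 1 / (n + 1) := by
      have : (0:ℝ) < 1 / (n + 1) := by positivity
      linarith
    obtain ⟨_, ⟨f, rfl⟩, h⟩ := exists_lt_of_csInf_lt hne hlt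
    exact ⟨f, h⟩
  choose u hu using hseq
  have hcauchy : CauchySeq u := by
    rw [Metric.cauchySeq_iff]
    intro ε hε
    obtain ⟨N, hN⟩ := exists_nat_gt (8 / (β * ε ^ 2))
    refine ⟨N, fun p hp q hq => ?_⟩
    have hk := key (u p) (u q)
    have hmid : m ≤ J ((2:ℝ)⁻¹ • (u p + u q)) := hmle _
    have hp1 : 1 / ((p:ℝ) + 1) ≤ 1 / ((N:ℝ) + 1) := by
      apply one_div_le_one_div_of_le (by positivity)
      have : (N:ℝ) ≤ p := by exact_mod_cast hp
      linarith
    have hq1 : 1 / ((q:ℝ) + 1) ≤ 1 / ((N:ℝ) + 1) := by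
      apply one_div_le_one_div_of_le (by positivity)
      have : (N:ℝ) ≤ q := by exact_mod_cast hq
      linarith
    have hbound : (β / 4) * ‖u p - u q‖ ^ 2 ≤ 2 / ((N:ℝ) + 1) := by
      have h1 := hu p
      have h2 := hu q
      have : 2 / ((N:ℝ) + 1) = 1 / ((N:ℝ) + 1) + 1 / ((N:ℝ) + 1) := by ring
      rw [this]
      linarith
    have h8 : 8 < ((N:ℝ) + 1) * (β * ε ^ 2) := by
      have hpos : 0 < β * ε ^ 2 := by positivity
      have := (div_lt_iff₀ hpos).mp (hN.trans (lt_add_one _))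
      linarith [mul_comm ((N:ℝ)) (β * ε ^ 2)]
    have hNpos : (0:ℝ) < (N:ℝ) + 1 := by positivity
    have hsmall : 2 / ((N:ℝ) + 1) < β * ε ^ 2 / 4 := by
      rw [div_lt_div_iff₀ hNpos (by norm_num)]
      nlinarith
    have hlt2 : ‖u p - u q‖ ^ 2 < ε ^ 2 := by nlinarith
    rw [dist_eq_norm]
    exact lt_of_pow_lt_pow_left₀ 2 hε.le hlt2
  obtain ⟨fstar, hf⟩ := cauchySeq_tendsto_of_complete hcauchy
  have hJcont : Continuous J := by
    have : J = fun f => (1 / 2) * ‖M f - b‖ ^ 2 + (β / 2) * ‖f‖ ^ 2 := funext hJ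
    rw [this]; fun_prop
  have hlim : Tendsto (fun n => J (u n)) atTop (𝓝 (J fstar)) :=
    (hJcont.tendsto _).comp hf
  have hmlim : Tendsto (fun n : ℕ => J (u n)) atTop (𝓝 m) := by
    have hup : Tendsto (fun n : ℕ => m + 1 / ((n:ℝ) + 1)) atTop (𝓝 (m + 0)) :=
      tendsto_const_nhds.add tendsto_one_div_add_atTop_nhds_zero_nat
    rw [add_zero] at hup
    exact tendsto_of_tendsto_of_tendsto_of_le_of_le tendsto_const_nhds hup
      (fun n => hmle (u n)) (fun n => (hu n).le)
  have hJf : J fstar = m := tendsto_nhds_unique hlim hmlim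
  have hmin : ∀ f, J fstar ≤ J f := fun f => hJf ▸ hmle f
  refine ⟨fstar, hmin, fun g hg => ?_⟩
  have hk := key g fstar
  have h1 : J g ≤ J fstar := hg fstar
  have h2 : J fstar ≤ J ((2:ℝ)⁻¹ • (g + fstar)) := hmin _
  have hnorm : ‖g - fstar‖ ^ 2 ≤ 0 := by nlinarith
  have : g - fstar = 0 := by
    have := sq_nonneg ‖g - fstar‖
    have hz : ‖g - fstar‖ = 0 := by nlinarith
    exact norm_eq_zero.mp hz
  exact sub_eq_zero.mp this
end

section
/- Let H and K be real Hilbert spaces, M : H → K a compact linear map, β ≥ 0, b ∈ K, and let (bₙ) be a sequence in K with bₙ → b in norm. Define Jₙ(f) = (1/2)‖M f − bₙ‖²_K + (β/2)‖f‖²_H and J_β(f) = (1/2)‖M f − b‖²_K + (β/2)‖f‖²_H. Suppose for each n the element fₙ ∈ H is a minimizer of Jₙ over H (i.e., Jₙ(fₙ) ≤ Jₙ(f) for all f ∈ H), and suppose (fₙ) converges weakly to some f* ∈ H. Then f* is a minimizer of J_β over H: J_β(f*) ≤ J_β(f) for all f ∈ H. -/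
open scoped RealInnerProductSpace
open Filter Topology

/-- If `bₙ → b` in norm, each `fₙ` minimises the noisy Tikhonov
functional `Jₙ` over `H`, and `fₙ ⇀ f*` weakly, then `f*` minimises `J_β` over `H`. -/
theorem stmt_10
    {H : Type*} [NormedAddCommGroup H] [InnerProductSpace ℝ H] [CompleteSpace H]
    {K : Type*} [NormedAddCommGroup K] [InnerProductSpace ℝ K] [CompleteSpace K]
    (M : H →L[ℝ] K) (hM : IsCompactOperator M)
    (β : ℝ) (hβ : 0 ≤ β) (b : K)
    (bseq : ℕ → K) (hb : Tendsto (fun n => ‖bseq n - b‖) atTop (𝓝 0))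
    (Jn : ℕ → H → ℝ)
    (hJn : ∀ n f, Jn n f = (1 / 2) * ‖M f - bseq n‖ ^ 2 + (β / 2) * ‖f‖ ^ 2)
    (J : H → ℝ)
    (hJ : ∀ f, J f = (1 / 2) * ‖M f - b‖ ^ 2 + (β / 2) * ‖f‖ ^ 2)
    (f : ℕ → H) (hmin : ∀ n, ∀ g : H, Jn n (f n) ≤ Jn n g)
    (fstar : H)
    (hweak : ∀ g : H, Tendsto (fun n => ⟪f n, g⟫) atTop (𝓝 ⟪fstar, g⟫)) :
    ∀ g : H, J fstar ≤ J g := by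
  intro g
  have hb' : Tendsto bseq atTop (𝓝 b) := by
    rwa [tendsto_iff_norm_sub_tendsto_zero]
  set v : K := M fstar - b with hv
  -- weak convergence of M (f n) tested against v, via the adjoint
  have hMf : Tendsto (fun n => ⟪M (f n), v⟫) atTop (𝓝 ⟪M fstar, v⟫) := by
    have := hweak ((ContinuousLinearMap.adjoint M) v)
    simpa [ContinuousLinearMap.adjoint_inner_right] using this
  have hbv : Tendsto (fun n => ⟪bseq n, v⟫) atTop (𝓝 ⟪b, v⟫) :=
    (hb'.inner tendsto_const_nhds)
  have h1 : Tendsto (fun n => ⟪M (f n) - bseq n, v⟫) atTop (𝓝 ⟪M fstar - b, v⟫) := by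
    simpa [inner_sub_left] using hMf.sub hbv
  have h2 : Tendsto (fun n => ⟪f n, fstar⟫) atTop (𝓝 ⟪fstar, fstar⟫) := hweak fstar
  -- lower bound sequence
  set a : ℕ → ℝ := fun n =>
    (1 / 2) * (2 * ⟪M (f n) - bseq n, v⟫ - ‖v‖ ^ 2)
      + (β / 2) * (2 * ⟪f n, fstar⟫ - ‖fstar‖ ^ 2) with ha
  have hlim_a : Tendsto a atTop (𝓝 (J fstar)) := by
    have : Tendsto a atTop (𝓝 ((1 / 2) * (2 * ⟪M fstar - b, v⟫ - ‖v‖ ^ 2)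
        + (β / 2) * (2 * ⟪fstar, fstar⟫ - ‖fstar‖ ^ 2))) := by
      exact (((h1.const_mul 2).sub tendsto_const_nhds).const_mul (1 / 2)).add
        (((h2.const_mul 2).sub tendsto_const_nhds).const_mul (β / 2))
    have heq : (1 / 2) * (2 * ⟪M fstar - b, v⟫ - ‖v‖ ^ 2)
        + (β / 2) * (2 * ⟪fstar, fstar⟫ - ‖fstar‖ ^ 2) = J fstar := by
      rw [hJ, hv, real_inner_self_eq_norm_sq, real_inner_self_eq_norm_sq]
      ring
    rwa [heq] at this
  have hlim_g : Tendsto (fun n => Jn n g) atTop (𝓝 (J g)) := by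
    have h3 : Tendsto (fun n => M g - bseq n) atTop (𝓝 (M g - b)) :=
      tendsto_const_nhds.sub hb'
    have : Tendsto (fun n => (1 / 2) * ‖M g - bseq n‖ ^ 2 + (β / 2) * ‖g‖ ^ 2)
        atTop (𝓝 ((1 / 2) * ‖M g - b‖ ^ 2 + (β / 2) * ‖g‖ ^ 2)) := by
      exact ((((h3.norm).pow 2).const_mul (1 / 2)).add tendsto_const_nhds)
    simpa [hJn, hJ] using this
  refine le_of_tendsto_of_tendsto' hlim_a hlim_g (fun n => ?_)
  have key : a n ≤ Jn n (f n) := by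
    rw [hJn, ha]
    have e1 : ‖(M (f n) - bseq n) - v‖ ^ 2
        = ‖M (f n) - bseq n‖ ^ 2 - 2 * ⟪M (f n) - bseq n, v⟫ + ‖v‖ ^ 2 :=
      norm_sub_sq_real _ _
    have e2 : ‖f n - fstar‖ ^ 2 = ‖f n‖ ^ 2 - 2 * ⟪f n, fstar⟫ + ‖fstar‖ ^ 2 :=
      norm_sub_sq_real _ _
    nlinarith [sq_nonneg ‖(M (f n) - bseq n) - v‖, sq_nonneg ‖f n - fstar‖,
      mul_nonneg hβ (sq_nonneg ‖f n - fstar‖)]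
  exact key.trans (hmin n g)
end

section
/- Let H and K be real Hilbert spaces, M : H → K a compact linear map, β > 0, b ∈ K, and let (bₙ) be a sequence in K with bₙ → b in norm. Define Jₙ(f) = (1/2)‖M f − bₙ‖²_K + (β/2)‖f‖²_H and J_β(f) = (1/2)‖M f − b‖²_K + (β/2)‖f‖²_H. Suppose for each n the element fₙ ∈ H is the minimizer of Jₙ over H, and suppose the sequence (fₙ) is uniformly bounded in H. Then the whole sequence (fₙ) converges weakly to the unique minimizer f* of J_β over H. -/
open scoped RealInnerProductSpace
open Filter Topology

/-- Midpoint norm-square identity in a real inner product space. -/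
lemma midpoint_norm_sq' {V : Type*} [NormedAddCommGroup V] [InnerProductSpace ℝ V]
    (u v : V) :
    ‖(2:ℝ)⁻¹ • (u + v)‖ ^ 2
      = (1/2) * ‖u‖ ^ 2 + (1/2) * ‖v‖ ^ 2 - (1/4) * ‖u - v‖ ^ 2 := by
  have hs : ‖(2:ℝ)⁻¹ • (u + v)‖ = 2⁻¹ * ‖u + v‖ := by
    rw [norm_smul]; norm_num
  have h1 := norm_add_sq_real u v
  have h2 := norm_sub_sq_real u v
  rw [hs]
  nlinarith [h1, h2]

/-- Difference of squared norms is controlled by the norm of the difference. -/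
lemma sq_norm_sub_le' {V : Type*} [NormedAddCommGroup V] (u v : V) :
    ‖u‖ ^ 2 - ‖v‖ ^ 2 ≤ (‖u‖ + ‖v‖) * ‖u - v‖ := by
  have h := norm_sub_norm_le u v
  nlinarith [norm_nonneg u, norm_nonneg v, norm_nonneg (u - v)]

/-- For `β > 0`, if `bₙ → b` in norm, each `fₙ` is the minimiser of
the noisy Tikhonov functional `Jₙ` over `H`, and `(fₙ)` is uniformly bounded, then the
whole sequence `(fₙ)` converges weakly to the unique minimiser of `J_β` over `H`. -/
theorem stmt_11
    {H : Type*} [NormedAddCommGroup H] [InnerProductSpace ℝ H] [CompleteSpace H]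
    {K : Type*} [NormedAddCommGroup K] [InnerProductSpace ℝ K] [CompleteSpace K]
    (M : H →L[ℝ] K) (hM : IsCompactOperator M)
    (β : ℝ) (hβ : 0 < β) (b : K)
    (bseq : ℕ → K) (hb : Tendsto (fun n => ‖bseq n - b‖) atTop (𝓝 0))
    (Jn : ℕ → H → ℝ)
    (hJn : ∀ n f, Jn n f = (1 / 2) * ‖M f - bseq n‖ ^ 2 + (β / 2) * ‖f‖ ^ 2)
    (J : H → ℝ)
    (hJ : ∀ f, J f = (1 / 2) * ‖M f - b‖ ^ 2 + (β / 2) * ‖f‖ ^ 2)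
    (f : ℕ → H) (hmin : ∀ n, ∀ g : H, Jn n (f n) ≤ Jn n g)
    (C : ℝ) (hbdd : ∀ n, ‖f n‖ ≤ C) :
    ∃ fstar : H, (∀ g : H, J fstar ≤ J g) ∧
      (∀ g : H, Tendsto (fun n => ⟪f n, g⟫) atTop (𝓝 ⟪fstar, g⟫)) := by
  -- bseq tends to b
  have hbt : Tendsto bseq atTop (𝓝 b) := by
    rw [tendsto_iff_norm_sub_tendsto_zero]; exact hb
  -- strong convexity estimate at the minimizer
  have key : ∀ n (g : H), β / 4 * ‖g - f n‖ ^ 2 ≤ Jn n g - Jn n (f n) := by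
    intro n g
    set a := f n with ha
    set c := bseq n with hc
    have hmid := hmin n ((2:ℝ)⁻¹ • (a + g))
    have hMm : M ((2:ℝ)⁻¹ • (a + g)) - c
        = (2:ℝ)⁻¹ • ((M a - c) + (M g - c)) := by
      rw [map_smul, map_add]
      module
    have e1 : ‖M ((2:ℝ)⁻¹ • (a + g)) - c‖ ^ 2
        = (1/2) * ‖M a - c‖ ^ 2 + (1/2) * ‖M g - c‖ ^ 2
          - (1/4) * ‖(M a - c) - (M g - c)‖ ^ 2 := by
      rw [hMm, midpoint_norm_sq']
    have e2 : ‖(2:ℝ)⁻¹ • (a + g)‖ ^ 2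
        = (1/2) * ‖a‖ ^ 2 + (1/2) * ‖g‖ ^ 2 - (1/4) * ‖a - g‖ ^ 2 :=
      midpoint_norm_sq' a g
    rw [hJn n ((2:ℝ)⁻¹ • (a + g)), e1, e2] at hmid
    rw [hJn n g, hJn n a]
    have hnn : (0:ℝ) ≤ ‖(M a - c) - (M g - c)‖ ^ 2 := by positivity
    have hrev : ‖g - a‖ = ‖a - g‖ := norm_sub_rev g a
    rw [hrev]
    rw [hJn n a] at hmid
    nlinarith [hmid, hnn]
  -- bound on bseq
  obtain ⟨B, hB⟩ : ∃ B, ∀ n, ‖bseq n‖ ≤ B := by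
    have := (hbt.norm).bddAbove_range
    obtain ⟨B, hB⟩ := this
    exact ⟨B, fun n => hB ⟨n, rfl⟩⟩
  obtain ⟨D, hDdef⟩ : ∃ D : ℝ, D = ‖M‖ * C + B := ⟨_, rfl⟩
  have hC0 : 0 ≤ C := le_trans (norm_nonneg _) (hbdd 0)
  have hB0 : 0 ≤ B := le_trans (norm_nonneg _) (hB 0)
  have hD0 : 0 ≤ D := by rw [hDdef]; positivity
  -- difference of functionals at bounded points
  have hdiff : ∀ p q : ℕ, ∀ h : H, ‖h‖ ≤ C →
      Jn p h - Jn q h ≤ D * ‖bseq p - bseq q‖ := by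
    intro p q h hh
    rw [hJn p h, hJn q h, hDdef]
    have e : (M h - bseq p) - (M h - bseq q) = bseq q - bseq p := by abel
    have h1 := sq_norm_sub_le' (M h - bseq p) (M h - bseq q)
    rw [e] at h1
    have hb1 : ‖M h - bseq p‖ ≤ ‖M‖ * C + B := by
      calc ‖M h - bseq p‖ ≤ ‖M h‖ + ‖bseq p‖ := norm_sub_le _ _
        _ ≤ ‖M‖ * C + B := by
            have := M.le_opNorm h
            have : ‖M h‖ ≤ ‖M‖ * C :=
              le_trans this (mul_le_mul_of_nonneg_left hh (norm_nonneg M))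
            linarith [hB p]
    have hb2 : ‖M h - bseq q‖ ≤ ‖M‖ * C + B := by
      calc ‖M h - bseq q‖ ≤ ‖M h‖ + ‖bseq q‖ := norm_sub_le _ _
        _ ≤ ‖M‖ * C + B := by
            have := M.le_opNorm h
            have : ‖M h‖ ≤ ‖M‖ * C :=
              le_trans this (mul_le_mul_of_nonneg_left hh (norm_nonneg M))
            linarith [hB q]
    have hrev : ‖bseq q - bseq p‖ = ‖bseq p - bseq q‖ := norm_sub_rev _ _
    rw [hrev] at h1
    nlinarith [norm_nonneg (bseq p - bseq q), norm_nonneg (M h - bseq p),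
      norm_nonneg (M h - bseq q)]
  -- Cauchy estimate
  have key2 : ∀ n m : ℕ, β / 4 * ‖f m - f n‖ ^ 2 ≤ 2 * D * ‖bseq n - bseq m‖ := by
    intro n m
    have h1 := key n (f m)
    have h2 := hdiff n m (f m) (hbdd m)
    have h3 := hdiff m n (f n) (hbdd n)
    have h4 := hmin m (f n)
    have hrev : ‖bseq m - bseq n‖ = ‖bseq n - bseq m‖ := norm_sub_rev _ _
    rw [hrev] at h3
    linarith
  -- f is Cauchy
  have hcauchy : CauchySeq f := by
    rw [Metric.cauchySeq_iff']
    intro ε hε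
    obtain ⟨δ, hδdef⟩ : ∃ δ : ℝ, δ = β * ε ^ 2 / (16 * (D + 1)) := ⟨_, rfl⟩
    have hδ0 : 0 < δ := by rw [hδdef]; positivity
    obtain ⟨N, hN⟩ := (Metric.tendsto_atTop.mp hb) δ hδ0
    refine ⟨N, fun n hn => ?_⟩
    have h1 : ‖bseq n - b‖ < δ := by
      have := hN n hn
      rwa [Real.dist_eq, sub_zero, abs_of_nonneg (norm_nonneg _)] at this
    have h2 : ‖bseq N - b‖ < δ := by
      have := hN N le_rfl
      rwa [Real.dist_eq, sub_zero, abs_of_nonneg (norm_nonneg _)] at this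
    have h3 : ‖bseq N - bseq n‖ < 2 * δ := by
      calc ‖bseq N - bseq n‖ ≤ ‖bseq N - b‖ + ‖b - bseq n‖ := by
            have : bseq N - bseq n = (bseq N - b) + (b - bseq n) := by abel
            rw [this]; exact norm_add_le _ _
        _ < 2 * δ := by
            rw [norm_sub_rev b (bseq n)] at *
            linarith
    have h4 := key2 N n
    have h5 : 2 * D * ‖bseq N - bseq n‖ < β * ε ^ 2 / 4 := by
      have hle : 2 * D * ‖bseq N - bseq n‖ ≤ 2 * (D + 1) * ‖bseq N - bseq n‖ := by
        nlinarith [norm_nonneg (bseq N - bseq n)]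
      have h6 : 2 * (D + 1) * ‖bseq N - bseq n‖ < 2 * (D + 1) * (2 * δ) := by
        apply mul_lt_mul_of_pos_left h3
        positivity
      have h7 : 2 * (D + 1) * (2 * δ) = β * ε ^ 2 / 4 := by
        have hne : D + 1 ≠ 0 := by positivity
        rw [hδdef]; field_simp; ring
      linarith
    have h8 : ‖f n - f N‖ ^ 2 < ε ^ 2 := by nlinarith
    rw [dist_eq_norm]
    nlinarith [norm_nonneg (f n - f N)]
  obtain ⟨fstar, hfstar⟩ := cauchySeq_tendsto_of_complete hcauchy
  refine ⟨fstar, ?_, ?_⟩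
  · -- minimality
    intro g
    have hfn : Tendsto (fun n => M (f n) - bseq n) atTop (𝓝 (M fstar - b)) :=
      ((M.continuous.tendsto fstar).comp hfstar).sub hbt
    have h1 : Tendsto (fun n => Jn n (f n)) atTop (𝓝 (J fstar)) := by
      simp only [hJn, hJ]
      exact (((hfn.norm).pow 2).const_mul _).add
        ((((hfstar.norm).pow 2)).const_mul _)
    have h2 : Tendsto (fun n => Jn n g) atTop (𝓝 (J g)) := by
      simp only [hJn, hJ]
      have : Tendsto (fun n => M g - bseq n) atTop (𝓝 (M g - b)) :=
        tendsto_const_nhds.sub hbt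
      exact (((this.norm).pow 2).const_mul _).add tendsto_const_nhds
    exact le_of_tendsto_of_tendsto' h1 h2 (fun n => hmin n g)
  · -- weak convergence (from strong convergence)
    intro g
    exact hfstar.inner tendsto_const_nhds
end

section
/- Let n ≥ 1 be a natural number, h > 0 a real number, let r₀⁰, r₀¹, …, r₀ⁿ be strictly positive reals, and let s₋₁, s₀, s₁, …, sₙ be strictly positive reals (sᵢ playing the role of the weight r₁ at the half-grid point x_{i+1/2}). Define the (n+1)×(n+1) real matrix A by h²·A₀₀ = s₀ + s₋₁ + h²r₀⁰, h²·A₀₁ = −s₀ − s₋₁; for 1 ≤ i ≤ n−1: h²·A_{i,i−1} = −sᵢ, h²·A_{i,i} = sᵢ + s_{i−1} + h²r₀ⁱ, h²·A_{i,i+1} = −s_{i−1}; h²·A_{n,n−1} = −sₙ − s_{n−1}, h²·A_{n,n} = sₙ + s_{n−1} + h²r₀ⁿ; and A_{ij} = 0 whenever |i − j| > 1. Then every complex eigenvalue of A has strictly positive real part, A is invertible, and consequently for every J ∈ ℝ^{n+1} the linear system A·j = J has a unique solution j ∈ ℝ^{n+1}. -/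
open scoped RealInnerProductSpace
open Filter Topology

/-- The finite-difference matrix `A` of the 1D elliptic problem
`−(r₁ j′)′ + r₀ j = J` with Neumann boundary conditions (ghost points), with strictly
positive weights, has all its complex eigenvalues with strictly positive real part;
hence `A` is invertible and `A j = J` has a unique solution for every `J`.
Here `s k` (for `k : Fin (n+2)`) plays the role of `r₁` at the half-grid point
`x_{(k-1)+1/2}`, i.e. `s 0 = s₋₁ = r₁^{-1/2}` and `s (i+1) = sᵢ = r₁^{i+1/2}`. -/
theorem stmt_15
    (n : ℕ) (hn : 1 ≤ n) (h : ℝ) (hh : 0 < h)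
    (r0 : Fin (n + 1) → ℝ) (hr0 : ∀ i, 0 < r0 i)
    (s : Fin (n + 2) → ℝ) (hs : ∀ i, 0 < s i)
    (A : Matrix (Fin (n + 1)) (Fin (n + 1)) ℝ)
    (hA00 : h ^ 2 * A ⟨0, by omega⟩ ⟨0, by omega⟩
      = s ⟨1, by omega⟩ + s ⟨0, by omega⟩ + h ^ 2 * r0 ⟨0, by omega⟩)
    (hA01 : h ^ 2 * A ⟨0, by omega⟩ ⟨1, by omega⟩
      = -s ⟨1, by omega⟩ - s ⟨0, by omega⟩)
    (hAint : ∀ i : ℕ, ∀ hi1 : 1 ≤ i, ∀ hi2 : i ≤ n - 1,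
      h ^ 2 * A ⟨i, by omega⟩ ⟨i - 1, by omega⟩ = -s ⟨i + 1, by omega⟩ ∧
      h ^ 2 * A ⟨i, by omega⟩ ⟨i, by omega⟩
        = s ⟨i + 1, by omega⟩ + s ⟨i, by omega⟩ + h ^ 2 * r0 ⟨i, by omega⟩ ∧
      h ^ 2 * A ⟨i, by omega⟩ ⟨i + 1, by omega⟩ = -s ⟨i, by omega⟩)
    (hAn0 : h ^ 2 * A ⟨n, by omega⟩ ⟨n - 1, by omega⟩
      = -s ⟨n + 1, by omega⟩ - s ⟨n, by omega⟩)
    (hAnn : h ^ 2 * A ⟨n, by omega⟩ ⟨n, by omega⟩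
      = s ⟨n + 1, by omega⟩ + s ⟨n, by omega⟩ + h ^ 2 * r0 ⟨n, by omega⟩)
    (hAzero : ∀ i j : Fin (n + 1),
      (i.val + 1 < j.val ∨ j.val + 1 < i.val) → A i j = 0) :
    (∀ μ : ℂ, μ ∈ spectrum ℂ (A.map (Complex.ofReal ·)) → 0 < μ.re) ∧
    IsUnit A ∧
    ∀ J : Fin (n + 1) → ℝ, ∃! jvec : Fin (n + 1) → ℝ, A.mulVec jvec = J := by
  have h2 : (0:ℝ) < h ^ 2 := by positivity
  have key : ∀ k : Fin (n+1),
      (∑ j ∈ Finset.univ.erase k, |A k j|) + r0 k ≤ A k k := by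
      have h2 : (0:ℝ) < h ^ 2 := by positivity
      rintro ⟨i, hilt⟩
      rcases Nat.lt_or_ge i n with hkn | hkn
      · rcases Nat.eq_zero_or_pos i with hk0 | hk1
        · -- first row
          subst hk0
          have hsum : (∑ j ∈ Finset.univ.erase (⟨0, hilt⟩ : Fin (n+1)),
              |A ⟨0, hilt⟩ j|) = |A ⟨0, hilt⟩ ⟨1, by omega⟩| := by
            refine Finset.sum_eq_single_of_mem _ ?_ ?_
            · refine Finset.mem_erase.mpr ⟨?_, Finset.mem_univ _⟩
              simp only [ne_eq, Fin.mk.injEq]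
              omega
            · intro b hb hb1
              have hb0 : b.val ≠ 0 := fun hb0 => (Finset.mem_erase.mp hb).1 (Fin.ext hb0)
              have hb1' : b.val ≠ 1 := fun hb1' => hb1 (Fin.ext hb1')
              rw [hAzero _ b (Or.inl (by simp only [Fin.val_mk]; omega)), abs_zero]
          rw [hsum]
          have habs : h ^ 2 * |A ⟨0, hilt⟩ ⟨1, by omega⟩|
              = s ⟨1, by omega⟩ + s ⟨0, by omega⟩ := by
            rw [← abs_of_pos h2, ← abs_mul, hA01, abs_of_nonpos (by
              have := hs ⟨1, by omega⟩; have := hs ⟨0, by omega⟩; linarith)]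
            ring
          refine le_of_mul_le_mul_left ?_ h2
          nlinarith [habs, hA00]
        · -- interior row
            obtain ⟨t1, t2, t3⟩ := hAint i hk1 (by omega)
            have hne : (⟨i - 1, by omega⟩ : Fin (n+1)) ≠ ⟨i + 1, by omega⟩ := by
              simp only [ne_eq, Fin.mk.injEq]; omega
            have hsum : (∑ j ∈ Finset.univ.erase (⟨i, hilt⟩ : Fin (n+1)),
                |A ⟨i, hilt⟩ j|)
                = ∑ j ∈ ({⟨i - 1, by omega⟩, ⟨i + 1, by omega⟩} : Finset (Fin (n+1))),
                    |A ⟨i, hilt⟩ j| := by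
              refine (Finset.sum_subset ?_ ?_).symm
              · intro x hx
                refine Finset.mem_erase.mpr ⟨?_, Finset.mem_univ _⟩
                rcases Finset.mem_insert.mp hx with h' | h'
                · subst h'; simp only [ne_eq, Fin.mk.injEq]; omega
                · rw [Finset.mem_singleton.mp h']; simp only [ne_eq, Fin.mk.injEq]; omega
              · intro x hx hx'
                have hxk : x.val ≠ i := fun hxk => (Finset.mem_erase.mp hx).1 (Fin.ext hxk)
                have hxm : x.val ≠ i - 1 := fun hxm =>
                  hx' (Finset.mem_insert.mpr (Or.inl (Fin.ext hxm)))
                have hxp : x.val ≠ i + 1 := fun hxp =>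
                  hx' (Finset.mem_insert.mpr (Or.inr (Finset.mem_singleton.mpr (Fin.ext hxp))))
                rw [hAzero _ x (by simp only [Fin.val_mk]; omega), abs_zero]
            rw [hsum, Finset.sum_pair hne]
            have habs1 : h ^ 2 * |A ⟨i, hilt⟩ ⟨i - 1, by omega⟩| = s ⟨i + 1, by omega⟩ := by
              rw [← abs_of_pos h2, ← abs_mul, t1, abs_neg, abs_of_pos (hs _)]
            have habs2 : h ^ 2 * |A ⟨i, hilt⟩ ⟨i + 1, by omega⟩| = s ⟨i, by omega⟩ := by
              rw [← abs_of_pos h2, ← abs_mul, t3, abs_neg, abs_of_pos (hs _)]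
            refine le_of_mul_le_mul_left ?_ h2
            nlinarith [habs1, habs2, t2]
      · -- last row
        have hkn' : i = n := by omega
        subst hkn'
        have hsum : (∑ j ∈ Finset.univ.erase (⟨i, hilt⟩ : Fin (i+1)),
            |A ⟨i, hilt⟩ j|) = |A ⟨i, hilt⟩ ⟨i - 1, by omega⟩| := by
          refine Finset.sum_eq_single_of_mem _ ?_ ?_
          · refine Finset.mem_erase.mpr ⟨?_, Finset.mem_univ _⟩
            simp only [ne_eq, Fin.mk.injEq]; omega
          · intro b hb hb1
            have hb0 : b.val ≠ i := fun hb0 => (Finset.mem_erase.mp hb).1 (Fin.ext hb0)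
            have hb1' : b.val ≠ i - 1 := fun hb1' => hb1 (Fin.ext hb1')
            have hbl : b.val < i + 1 := b.isLt
            rw [hAzero _ b (Or.inr (by simp only [Fin.val_mk]; omega)), abs_zero]
        rw [hsum]
        have habs : h ^ 2 * |A ⟨i, hilt⟩ ⟨i - 1, by omega⟩|
            = s ⟨i + 1, by omega⟩ + s ⟨i, by omega⟩ := by
          rw [← abs_of_pos h2, ← abs_mul, hAn0, abs_of_nonpos (by
            have := hs ⟨i + 1, by omega⟩; have := hs ⟨i, by omega⟩; linarith)]
          ring
        refine le_of_mul_le_mul_left ?_ h2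
        nlinarith [habs, hAnn]
  -- complex version of the key estimate
  set B := A.map (Complex.ofReal ·) with hB
  have keyB : ∀ k : Fin (n+1),
      (∑ j ∈ Finset.univ.erase k, ‖B k j‖) + r0 k ≤ A k k := by
    intro k
    have hEq : (∑ j ∈ Finset.univ.erase k, ‖B k j‖)
        = ∑ j ∈ Finset.univ.erase k, |A k j| := by
      refine Finset.sum_congr rfl fun j _ => ?_
      simp [hB, Matrix.map_apply, Real.norm_eq_abs]
    rw [hEq]; exact key k
  have spec : ∀ μ : ℂ, μ ∈ spectrum ℂ B → 0 < μ.re := by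
    intro μ hμ
    have hev : Module.End.HasEigenvalue (Matrix.toLin' B) μ := by
      rw [Module.End.hasEigenvalue_iff_mem_spectrum]
      rw [show Matrix.toLin' B = Matrix.toLinAlgEquiv' B from rfl]
      rwa [AlgEquiv.spectrum_eq Matrix.toLinAlgEquiv' B]
    obtain ⟨k, hk⟩ := eigenvalue_mem_ball hev
    rw [Metric.mem_closedBall, dist_eq_norm] at hk
    have h1 : |(μ - B k k).re| ≤ ‖μ - B k k‖ := Complex.abs_re_le_norm _
    have h2' : (μ - B k k).re = μ.re - A k k := by
      simp [hB, Matrix.map_apply]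
    rw [h2'] at h1
    have hcomb := abs_le.mp (h1.trans hk)
    have := keyB k
    have := hr0 k
    linarith [hcomb.1]
  refine ⟨spec, ?_, ?_⟩
  · -- IsUnit A
    have hdet : A.det ≠ 0 := by
      refine det_ne_zero_of_sum_row_lt_diag fun k => ?_
      have hk := key k
      have hr := hr0 k
      have hsumnn : (0:ℝ) ≤ ∑ j ∈ Finset.univ.erase k, |A k j| :=
        Finset.sum_nonneg fun j _ => abs_nonneg _
      have hdiag : 0 < A k k := by linarith
      show ∑ j ∈ Finset.univ.erase k, |A k j| < |A k k|
      rw [abs_of_pos hdiag]; linarith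
    exact (Matrix.isUnit_iff_isUnit_det A).mpr (isUnit_iff_ne_zero.mpr hdet)
  · intro J
    have hdet : IsUnit A.det := by
      refine isUnit_iff_ne_zero.mpr ?_
      refine det_ne_zero_of_sum_row_lt_diag fun k => ?_
      have hk := key k
      have hr := hr0 k
      have hsumnn : (0:ℝ) ≤ ∑ j ∈ Finset.univ.erase k, |A k j| :=
        Finset.sum_nonneg fun j _ => abs_nonneg _
      have hdiag : 0 < A k k := by linarith
      show ∑ j ∈ Finset.univ.erase k, |A k j| < |A k k|
      rw [abs_of_pos hdiag]; linarith
    refine ⟨A⁻¹.mulVec J, ?_, ?_⟩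
    · show A.mulVec (A⁻¹.mulVec J) = J
      rw [Matrix.mulVec_mulVec, Matrix.mul_nonsing_inv _ hdet, Matrix.one_mulVec]
    · intro y hy
      calc y = (A⁻¹ * A).mulVec y := by
              rw [Matrix.nonsing_inv_mul _ hdet, Matrix.one_mulVec]
        _ = A⁻¹.mulVec (A.mulVec y) := (Matrix.mulVec_mulVec _ _ _).symm
        _ = A⁻¹.mulVec J := by rw [hy]
end
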